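/- For any finite hypergraph H, the transversal of the transversal hypergraph equals the minimization of H: Tr(Tr H) = min H, where min H is the family of inclusion-minimal edges of H, provided the empty set is not an edge of H. -/
import Mathlib


variable {α : Type*} [DecidableEq α]

/-- `T` is a hitting set of the family `S`. -/
def Hits (S : Set (Finset α)) (T : Finset α) : Prop := ∀ s ∈ S, (T ∩ s).Nonempty

/-- `T` is a minimal hitting set (transversal) of `S`. -/
def IsMHS (S : Set (Finset α)) (T : Finset α) : Prop :=
  Hits S T ∧ ∀ T' ⊂ T, ¬ Hits S T'

/-- The transversal hypergraph: the family of all minimal hitting sets of `S`. -/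
def Tr (S : Set (Finset α)) : Set (Finset α) := {T | IsMHS S T}

/-- The inclusion-minimal members of a family. -/
def minFam (F : Set (Finset α)) : Set (Finset α) := {e ∈ F | ∀ f ∈ F, f ⊆ e → f = e}

/-- Every finite hitting set contains a minimal hitting set. -/
lemma exists_mhs_subset (S : Set (Finset α)) (T : Finset α) (hT : Hits S T) :
    ∃ T' ⊆ T, IsMHS S T' := by
  induction T using Finset.strongInduction with
  | _ T ih =>
    by_cases h : ∀ T' ⊂ T, ¬ Hits S T'
    · exact ⟨T, subset_rfl, hT, h⟩
    · push_neg at h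
      obtain ⟨T'', hsub, hh⟩ := h
      obtain ⟨T', hs, hm⟩ := ih T'' hsub hh
      exact ⟨T', hs.trans hsub.subset, hm⟩

/-- Every edge of `H` is a hitting set of `Tr H`. -/
lemma edge_hits_tr (H : Set (Finset α)) {e : Finset α} (he : e ∈ H) :
    Hits (Tr H) e := by
  intro T hT
  rw [Finset.inter_comm]
  exact hT.1 e he

/-- For a finite hypergraph without the empty edge, `Tr (Tr H) = min H`. -/
theorem tr_tr_eq_minFam (H : Set (Finset α)) (hfin : H.Finite)
    (hne : (∅ : Finset α) ∉ H) :
    Tr (Tr H) = minFam H := by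
  have key : ∀ (A : Finset α), (∀ f ∈ H, ∃ x ∈ f, x ∉ A) →
      ∃ T, IsMHS H T ∧ A ∩ T = ∅ := by
    intro A hA
    set U : Finset α := hfin.toFinset.biUnion id \ A with hU
    have hHitsU : Hits H U := by
      intro f hf
      obtain ⟨x, hxf, hxA⟩ := hA f hf
      refine ⟨x, Finset.mem_inter.2 ⟨Finset.mem_sdiff.2 ⟨?_, hxA⟩, hxf⟩⟩
      exact Finset.mem_biUnion.2 ⟨f, hfin.mem_toFinset.2 hf, hxf⟩
    obtain ⟨T, hTU, hTm⟩ := exists_mhs_subset H U hHitsU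
    refine ⟨T, hTm, ?_⟩
    rw [Finset.eq_empty_iff_forall_notMem]
    intro x hx
    rw [Finset.mem_inter] at hx
    exact (Finset.mem_sdiff.1 (hTU hx.2)).2 hx.1
  ext E
  constructor
  · rintro ⟨hHits, hmin⟩
    -- E contains an edge of H
    have hedge : ∃ e ∈ H, e ⊆ E := by
      by_contra hc
      push_neg at hc
      obtain ⟨T, hTm, hdisj⟩ := key E (fun f hf => by
        obtain ⟨x, hxf, hxE⟩ := Finset.not_subset.1 (hc f hf)
        exact ⟨x, hxf, hxE⟩)
      obtain ⟨x, hx⟩ := hHits T hTm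
      rw [hdisj] at hx
      exact absurd hx (Finset.notMem_empty x)
    obtain ⟨e, heH, heE⟩ := hedge
    have heq : e = E := by
      by_contra hne'
      exact hmin e (Finset.ssubset_iff_subset_ne.2 ⟨heE, hne'⟩) (edge_hits_tr H heH)
    subst heq
    refine ⟨heH, fun f hf hfE => ?_⟩
    by_contra hne'
    exact hmin f (Finset.ssubset_iff_subset_ne.2 ⟨hfE, hne'⟩) (edge_hits_tr H hf)
  · rintro ⟨heH, hmin⟩
    refine ⟨edge_hits_tr H heH, ?_⟩
    intro e' he' hHits'
    have : ∀ f ∈ H, ∃ x ∈ f, x ∉ e' := by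
      intro f hf
      by_contra hc
      push_neg at hc
      have hfe' : f ⊆ e' := hc
      have : f = E := hmin f hf (hfe'.trans he'.subset)
      subst this
      exact he'.not_subset hfe'
    obtain ⟨T, hTm, hdisj⟩ := key e' this
    obtain ⟨x, hx⟩ := hHits' T hTm
    rw [hdisj] at hx
    exact absurd hx (Finset.notMem_empty x)
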